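/- Let R be an alternative ring in which every non-zero commutator [a,b] = a*b - b*a is not a left zero divisor (i.e. if [a,b] ≠ 0 and [a,b]*t = 0 then t = 0). If x in R satisfies x*t = 0 for some t, then [x, y*x]*t = 0 for every y in R. -/

import Mathlib

/-!
By flexibility `[x, y x] = [x, y] x`; the rest is driven by the Moufang identities.
If `t x ≠ 0`, then `[t, x] = t x` is a nonzero commutator, and the middle Moufang identity gives
`(t x)((z x) t) = (t ((x z) x)) t = (t (x z))(x t) = 0`, so `(z x) t = 0` for every `z`.
If `t x = 0` as well, then `x` and `t` anticommute past any third factor, which together with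
the left and right Moufang identities kills both `((x y) x) t` and `((y x) x) t`.
-/

class IsAlternative (R : Type*) [NonUnitalNonAssocRing R] : Prop where
  associator_self_left (x y : R) : associator x x y = 0
  associator_self_right (x y : R) : associator y x x = 0

namespace IsAlternative

open MulOpposite

variable {R : Type*} [NonUnitalNonAssocRing R] [IsAlternative R]

theorem associator_swap_left (a b c : R) : associator b a c = -associator a b c := by
  have h := associator_self_left (a + b) c
  have ha := associator_self_left a c
  have hb := associator_self_left b c
  simp only [associator_apply, add_mul, mul_add] at h ha hb ⊢
  linear_combination (norm := abel) h - ha - hb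

theorem associator_swap_right (a b c : R) : associator a c b = -associator a b c := by
  have h := associator_self_right (b + c) a
  have hb := associator_self_right b a
  have hc := associator_self_right c a
  simp only [associator_apply, add_mul, mul_add] at h hb hc ⊢
  linear_combination (norm := abel) h - hb - hc

theorem associator_self_mid (a b : R) : associator a b a = 0 := by
  rw [associator_swap_right, associator_self_left, neg_zero]

theorem associator_cycle (a b c : R) : associator b c a = associator a b c := by
  rw [associator_swap_right, associator_swap_left, neg_neg]

theorem flexible (a b : R) : (a * b) * a = a * (b * a) :=
  sub_eq_zero.mp (associator_self_mid a b)

instance : IsAlternative Rᵐᵒᵖ where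
  associator_self_left x y := by rw [associator_op, associator_self_right, op_zero, neg_zero]
  associator_self_right x y := by rw [associator_op, associator_self_left, op_zero, neg_zero]

theorem associator_moufang (x a y : R) : associator (x * a) x y + associator x a (x * y) = 0 := by
  have h₁ := associator_cocycle x x a y
  have h₂ := associator_cocycle x x y a
  rw [associator_self_left, associator_self_left, zero_mul] at h₁ h₂
  rw [associator_swap_right x a y, associator_swap_right (x * x) a y, mul_neg] at h₂
  rw [associator_swap_left x (x * a), associator_swap_right x (x * y)]
  linear_combination (norm := abel) -(h₁ + h₂)

theorem moufang_left (x a y : R) : ((x * a) * x) * y = x * (a * (x * y)) := by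
  have h := associator_moufang x a y
  simp only [associator_apply] at h
  linear_combination (norm := abel) h

theorem moufang_right (x a y : R) : y * ((x * a) * x) = ((y * x) * a) * x := by
  apply op_injective
  simp only [op_mul]
  rw [← flexible, moufang_left]

theorem moufang_middle (x y a : R) : (x * y) * (a * x) = (x * (y * a)) * x := by
  have e₁ := associator_swap_right x (a * x) y
  have e₂ := congrArg (x * ·) (associator_cycle y a x)
  have h := moufang_left x a y
  rw [flexible] at h ⊢
  simp only [associator_apply, mul_sub] at e₁ e₂
  linear_combination (norm := abel) e₁ + e₂ - h

theorem mul_mul_mul_mul_eq_zero {x t : R} (h : x * t = 0) (z : R) :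
    (t * x) * ((z * x) * t) = 0 :=
  calc (t * x) * ((z * x) * t)
      = (t * (x * (z * x))) * t := moufang_middle t x (z * x)
    _ = (t * ((x * z) * x)) * t := by rw [← flexible x z]
    _ = (t * (x * z)) * (x * t) := (moufang_middle t (x * z) x).symm
    _ = 0 := by rw [h, mul_zero]

theorem mul_mul_eq_neg_mul_mul {x t : R} (hxt : x * t = 0) (htx : t * x = 0) (w : R) :
    x * (t * w) = -(t * (x * w)) := by
  have h := associator_swap_left t x w
  simp only [associator_apply, hxt, htx, zero_mul, zero_sub, neg_neg] at h
  exact neg_eq_iff_eq_neg.mp h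

theorem mul_mul_mul_eq_zero {x t : R} (hxt : x * t = 0) (htx : t * x = 0) (z : R) :
    ((z * x) * x) * t = 0 :=
  calc ((z * x) * x) * t
      = associator (z * x) x t := by rw [associator_apply, hxt, mul_zero, sub_zero]
    _ = associator x t (z * x) := (associator_cycle _ _ _).symm
    _ = -(x * (t * (z * x))) := by rw [associator_apply, hxt, zero_mul, zero_sub]
    _ = t * ((x * z) * x) := by rw [mul_mul_eq_neg_mul_mul hxt htx, neg_neg, flexible]
    _ = ((t * x) * z) * x := moufang_right x z t
    _ = 0 := by rw [htx, zero_mul, zero_mul]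

end IsAlternative

open IsAlternative in
theorem stmt_15 {R : Type*} [NonUnitalNonAssocRing R]
    (hl : ∀ x y : R, (x*x)*y = x*(x*y))
    (hr : ∀ x y : R, (y*x)*x = y*(x*x))
    (hA : ∀ a b : R, a*b - b*a ≠ 0 → ∀ t : R, (a*b - b*a)*t = 0 → t = 0) :
    ∀ x t : R, x*t = 0 → ∀ y : R, (x*(y*x) - (y*x)*x)*t = 0 := by
  have : IsAlternative R := ⟨fun x y ↦ sub_eq_zero.mpr (hl x y), fun x y ↦ sub_eq_zero.mpr (hr x y)⟩
  intro x t hxt y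
  rw [← flexible]
  by_cases htx : t * x = 0
  · rw [sub_mul, moufang_left, hxt, mul_zero, mul_zero, mul_mul_mul_eq_zero hxt htx, sub_zero]
  · have hc : t * x - x * t ≠ 0 := by rwa [hxt, sub_zero]
    refine hA t x hc _ ?_
    rw [hxt, sub_zero, ← sub_mul]
    exact mul_mul_mul_mul_eq_zero hxt _
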